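/- arXiv:1306.1187 — 4 statements merged into one kernel-verified Lean document; each statement's English description precedes it below -/
import Mathlib

section
/- Lemma 2: Let θ, W, X1, X2 be random variables on a common probability space with standard Borel value spaces, and let T be a measurable function of the pair (X1, X2). If θ and (X1, X2) are conditionally independent given W, and W and (X1, X2) are conditionally independent given T(X1, X2) (i.e., T(X1, X2) is sufficient for W with respect to (X1, X2)), then θ and (X1, X2) are conditionally independent given T(X1, X2). -/
open MeasureTheory ProbabilityTheory

/-!
Fix an event `A = {θ ∈ s}` and put `g = P(A | W)`. Since `θ − W − X` is a Markov chain, conditioning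
on `X` cannot distinguish `1_A` from `g`: `P(A | X) = E[g | X]`. Since `W − T(X) − X` is a Markov
chain and `g` is a bounded function of `W`, `E[g | X] = E[g | T(X)]`. Hence `P(A | X)` is
`σ(T(X))`-measurable, and because `σ(T(X)) ⊆ σ(X)` this is equivalent to `θ − T(X) − X`.
-/

section CondExp

variable {Ω : Type*} {m m₀ : MeasurableSpace Ω} {μ : Measure Ω}

lemma setIntegral_eq_integral_indicator_one_mul {s : Set Ω} (hs : MeasurableSet s)
    (f : Ω → ℝ) : ∫ ω in s, f ω ∂μ = ∫ ω, s.indicator (fun _ ↦ (1 : ℝ)) ω * f ω ∂μ := by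
  rw [← integral_indicator hs]
  congr 1 with ω
  by_cases hω : ω ∈ s <;> simp [hω]

lemma abs_indicator_one_le_one (s : Set Ω) (ω : Ω) : |s.indicator (fun _ ↦ (1 : ℝ)) ω| ≤ 1 := by
  by_cases hω : ω ∈ s <;> simp [hω]

lemma ae_abs_condExp_indicator_le_one (s : Set Ω) : ∀ᵐ ω ∂μ, |(μ⟦s | m⟧) ω| ≤ 1 :=
  ae_bdd_abs_condExp_of_ae_bdd_abs (.of_forall (abs_indicator_one_le_one s))

lemma integral_mul_condExp_of_bound [IsFiniteMeasure μ] (hm : m ≤ m₀) {φ g : Ω → ℝ}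
    (hφ : StronglyMeasurable[m] φ) {C : ℝ} (hφC : ∀ᵐ ω ∂μ, |φ ω| ≤ C) (hg : Integrable g μ) :
    ∫ ω, φ ω * μ[g | m] ω ∂μ = ∫ ω, φ ω * g ω ∂μ :=
  calc ∫ ω, φ ω * μ[g | m] ω ∂μ = ∫ ω, μ[φ * g | m] ω ∂μ :=
        integral_congr_ae (condExp_stronglyMeasurable_mul_of_bound hm hφ hg C
          (by simpa only [Real.norm_eq_abs] using hφC)).symm
    _ = ∫ ω, φ ω * g ω ∂μ := integral_condExp hm

lemma integral_condExp_mul_eq_integral_mul_condExp [IsFiniteMeasure μ] (hm : m ≤ m₀)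
    {f g : Ω → ℝ} {C D : ℝ} (hf : Integrable f μ) (hfC : ∀ᵐ ω ∂μ, |f ω| ≤ C)
    (hg : Integrable g μ) (hgD : ∀ᵐ ω ∂μ, |g ω| ≤ D) :
    ∫ ω, μ[f | m] ω * g ω ∂μ = ∫ ω, f ω * μ[g | m] ω ∂μ :=
  calc ∫ ω, μ[f | m] ω * g ω ∂μ = ∫ ω, μ[f | m] ω * μ[g | m] ω ∂μ :=
        (integral_mul_condExp_of_bound hm stronglyMeasurable_condExp
          (ae_bdd_abs_condExp_of_ae_bdd_abs hfC) hg).symm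
    _ = ∫ ω, μ[g | m] ω * μ[f | m] ω ∂μ := by simp_rw [mul_comm]
    _ = ∫ ω, μ[g | m] ω * f ω ∂μ :=
        integral_mul_condExp_of_bound hm stronglyMeasurable_condExp
          (ae_bdd_abs_condExp_of_ae_bdd_abs hgD) hf
    _ = ∫ ω, f ω * μ[g | m] ω ∂μ := by simp_rw [mul_comm]

end CondExp

namespace ProbabilityTheory

variable {Ω : Type*} {m m₁ m₂ m₀ : MeasurableSpace Ω} [StandardBorelSpace Ω] {hm : m ≤ m₀}
  {μ : Measure Ω} [IsFiniteMeasure μ]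

theorem CondIndep.condExp_condExp_indicator (h : CondIndep m m₁ m₂ hm μ) (hm₁ : m₁ ≤ m₀)
    (hm₂ : m₂ ≤ m₀) {s : Set Ω} (hs : MeasurableSet[m₁] s) :
    μ[μ⟦s | m⟧ | m₂] =ᵐ[μ] μ⟦s | m₂⟧ := by
  refine (ae_eq_condExp_of_forall_setIntegral_eq hm₂ integrable_condExp
    (fun _ _ _ ↦ integrable_condExp.integrableOn) (fun u hu _ ↦ ?_)
    stronglyMeasurable_condExp.aestronglyMeasurable).symm
  have hs₀ := hm₁ s hs
  have hu₀ := hm₂ u hu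
  calc ∫ ω in u, (μ⟦s | m₂⟧) ω ∂μ
      = ∫ ω in u, s.indicator (fun _ ↦ (1 : ℝ)) ω ∂μ :=
        setIntegral_condExp hm₂ ((integrable_const 1).indicator hs₀) hu
    _ = ∫ ω, (μ⟦s ∩ u | m⟧) ω ∂μ := by
        rw [integral_condExp hm, ← integral_indicator hu₀, Set.indicator_indicator,
          Set.inter_comm]
    _ = ∫ ω, (μ⟦s | m⟧) ω * (μ⟦u | m⟧) ω ∂μ :=
        integral_congr_ae (((condIndep_iff _ _ _ _ hm₁ hm₂ μ).1 h s u hs hu))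
    _ = ∫ ω, (μ⟦s | m⟧) ω * u.indicator (fun _ ↦ (1 : ℝ)) ω ∂μ :=
        integral_mul_condExp_of_bound hm stronglyMeasurable_condExp
          (ae_abs_condExp_indicator_le_one s) ((integrable_const 1).indicator hu₀)
    _ = ∫ ω in u, (μ⟦s | m⟧) ω ∂μ := by
        rw [setIntegral_eq_integral_indicator_one_mul hu₀]
        simp_rw [mul_comm]

theorem CondIndep.condExp_condExp_of_bound (h : CondIndep m m₁ m₂ hm μ) (hm₁ : m₁ ≤ m₀)
    (hm₂ : m₂ ≤ m₀) {φ : Ω → ℝ} (hφ : StronglyMeasurable[m₁] φ) {C : ℝ}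
    (hφC : ∀ᵐ ω ∂μ, |φ ω| ≤ C) :
    μ[μ[φ | m] | m₂] =ᵐ[μ] μ[φ | m₂] := by
  have hφ_int : Integrable φ μ :=
    .of_bound (hφ.mono hm₁).aestronglyMeasurable C (by simpa only [Real.norm_eq_abs] using hφC)
  refine ae_eq_condExp_of_forall_setIntegral_eq hm₂ hφ_int
    (fun _ _ _ ↦ integrable_condExp.integrableOn) (fun u hu _ ↦ ?_)
    stronglyMeasurable_condExp.aestronglyMeasurable
  have hu₀ := hm₂ u hu
  have hu_int : Integrable (u.indicator fun _ ↦ (1 : ℝ)) μ := (integrable_const 1).indicator hu₀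
  -- Move the indicator of `u` onto `φ` by self-adjointness, then swap the conditioning using
  -- the indicator case for the reversed pair `m₂, m₁`.
  calc ∫ ω in u, μ[μ[φ | m] | m₂] ω ∂μ
      = ∫ ω, u.indicator (fun _ ↦ (1 : ℝ)) ω * μ[φ | m] ω ∂μ := by
        rw [setIntegral_condExp hm₂ integrable_condExp hu,
          setIntegral_eq_integral_indicator_one_mul hu₀]
    _ = ∫ ω, (μ⟦u | m⟧) ω * φ ω ∂μ :=
        integral_condExp_mul_eq_integral_mul_condExp hm hu_int
          (.of_forall (abs_indicator_one_le_one u)) hφ_int hφC |>.symm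
    _ = ∫ ω, φ ω * μ[μ⟦u | m⟧ | m₁] ω ∂μ := by
        rw [integral_mul_condExp_of_bound hm₁ hφ hφC integrable_condExp]
        simp_rw [mul_comm]
    _ = ∫ ω, φ ω * (μ⟦u | m₁⟧) ω ∂μ :=
        integral_congr_ae <| (h.symm.condExp_condExp_indicator hm₂ hm₁ hu).mono fun ω hω ↦
          congrArg (φ ω * ·) hω
    _ = ∫ ω in u, φ ω ∂μ := by
        rw [integral_mul_condExp_of_bound hm₁ hφ hφC hu_int,
          setIntegral_eq_integral_indicator_one_mul hu₀]
        simp_rw [mul_comm]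

theorem condIndep_of_condExp_indicator_ae_eq (hm₁ : m₁ ≤ m₀) (hm₂ : m₂ ≤ m₀) (hle : m ≤ m₂)
    (h : ∀ s, MeasurableSet[m₁] s → μ⟦s | m₂⟧ =ᵐ[μ] μ⟦s | m⟧) :
    CondIndep m m₁ m₂ hm μ := by
  refine (condIndep_iff _ _ _ _ hm₁ hm₂ μ).2 fun s t hs ht ↦ ?_
  have ht_sm : StronglyMeasurable[m₂] (t.indicator fun _ ↦ (1 : ℝ)) :=
    stronglyMeasurable_const.indicator ht
  have ht_int : Integrable (t.indicator fun _ ↦ (1 : ℝ)) μ :=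
    (integrable_const 1).indicator (hm₂ t ht)
  have hs_int : Integrable (s.indicator fun _ ↦ (1 : ℝ)) μ :=
    (integrable_const 1).indicator (hm₁ s hs)
  have h_inter : (s ∩ t).indicator (fun _ ↦ (1 : ℝ)) =
      s.indicator (fun _ ↦ 1) * t.indicator (fun _ ↦ 1) :=
    Set.inter_indicator_one
  calc μ⟦s ∩ t | m⟧
      =ᵐ[μ] μ[μ⟦s ∩ t | m₂⟧ | m] := (condExp_condExp_of_le hle hm₂).symm
    _ =ᵐ[μ] μ[μ⟦s | m₂⟧ * t.indicator (fun _ ↦ 1) | m] := by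
        rw [h_inter]
        exact condExp_congr_ae (condExp_mul_of_stronglyMeasurable_right ht_sm
          (h_inter ▸ (integrable_const 1).indicator ((hm₁ s hs).inter (hm₂ t ht))) hs_int)
    _ =ᵐ[μ] μ[μ⟦s | m⟧ * t.indicator (fun _ ↦ 1) | m] :=
        condExp_congr_ae ((h s hs).mul .rfl)
    _ =ᵐ[μ] μ⟦s | m⟧ * μ⟦t | m⟧ :=
        condExp_mul_of_stronglyMeasurable_left stronglyMeasurable_condExp
          (ht_int.bdd_mul integrable_condExp.aestronglyMeasurable
            (ae_abs_condExp_indicator_le_one s)) ht_int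

theorem CondIndep.condIndep_of_condIndep_of_le {mA mW mX mT : MeasurableSpace Ω}
    {hmW : mW ≤ m₀} {hmT : mT ≤ m₀} (hA : mA ≤ m₀) (hX : mX ≤ m₀) (hTX : mT ≤ mX)
    (hAX : CondIndep mW mA mX hmW μ) (hWX : CondIndep mT mW mX hmT μ) :
    CondIndep mT mA mX hmT μ := by
  refine condIndep_of_condExp_indicator_ae_eq hA hX hTX fun s hs ↦ ?_
  set g := μ⟦s | mW⟧
  have hg_mX : μ[g | mX] =ᵐ[μ] μ[g | mT] := by
    refine (hWX.condExp_condExp_of_bound hmW hX stronglyMeasurable_condExp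
      (ae_abs_condExp_indicator_le_one s)).symm.trans ?_
    rw [condExp_of_stronglyMeasurable hX (stronglyMeasurable_condExp.mono hTX) integrable_condExp]
  have hs_mX : μ⟦s | mX⟧ =ᵐ[μ] μ[g | mT] :=
    (hAX.condExp_condExp_indicator hA hX hs).symm.trans hg_mX
  calc μ⟦s | mX⟧ =ᵐ[μ] μ[g | mT] := hs_mX
    _ = μ[μ[g | mT] | mT] :=
        (condExp_of_stronglyMeasurable hmT stronglyMeasurable_condExp integrable_condExp).symm
    _ =ᵐ[μ] μ[μ⟦s | mX⟧ | mT] := condExp_congr_ae hs_mX.symm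
    _ =ᵐ[μ] μ⟦s | mT⟧ := condExp_condExp_of_le hTX hX

end ProbabilityTheory

theorem sufficient_for_hidden_implies_sufficient_general
    {Ω Θ 𝒲 𝒳₁ 𝒳₂ 𝒯 : Type*}
    [MeasurableSpace Ω] [StandardBorelSpace Ω]
    [MeasurableSpace Θ] [MeasurableSpace 𝒲] [MeasurableSpace 𝒳₁] [MeasurableSpace 𝒳₂]
    [MeasurableSpace 𝒯]
    (μ : Measure Ω) [IsProbabilityMeasure μ]
    (θ : Ω → Θ) (W : Ω → 𝒲) (X₁ : Ω → 𝒳₁) (X₂ : Ω → 𝒳₂) (T : 𝒳₁ × 𝒳₂ → 𝒯)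
    (hθ : Measurable θ) (hW : Measurable W) (hX₁ : Measurable X₁) (hX₂ : Measurable X₂)
    (hT : Measurable T)
    -- θ and (X₁, X₂) are conditionally independent given W
    (hθW : CondIndepFun (MeasurableSpace.comap W inferInstance) hW.comap_le
      θ (fun ω => (X₁ ω, X₂ ω)) μ)
    -- W and (X₁, X₂) are conditionally independent given T(X₁, X₂)
    (hWT : CondIndepFun
      (MeasurableSpace.comap (fun ω => T (X₁ ω, X₂ ω)) inferInstance)
      ((hT.comp (hX₁.prodMk hX₂)).comap_le)
      W (fun ω => (X₁ ω, X₂ ω)) μ) :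
    -- θ and (X₁, X₂) are conditionally independent given T(X₁, X₂)
    CondIndepFun
      (MeasurableSpace.comap (fun ω => T (X₁ ω, X₂ ω)) inferInstance)
      ((hT.comp (hX₁.prodMk hX₂)).comap_le)
      θ (fun ω => (X₁ ω, X₂ ω)) μ := by
  rw [condIndepFun_iff_condIndep] at hθW hWT ⊢
  exact hθW.condIndep_of_condIndep_of_le hθ.comap_le (hX₁.prodMk hX₂).comap_le
    (hT.comp (comap_measurable _)).comap_le hWT

/-- **Lemma 2.** If `θ − W − (X₁, X₂)` is a Markov chain and `T(X₁, X₂)` is sufficient for `W`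
with respect to `(X₁, X₂)` (i.e., `W − T(X₁, X₂) − (X₁, X₂)` is a Markov chain), then
`θ − T(X₁, X₂) − (X₁, X₂)` is a Markov chain, i.e., `T(X₁, X₂)` is sufficient for `θ`. -/
theorem sufficient_for_hidden_implies_sufficient
    {Ω Θ 𝒲 𝒳₁ 𝒳₂ 𝒯 : Type*}
    [MeasurableSpace Ω] [StandardBorelSpace Ω] [Nonempty Ω]
    [MeasurableSpace Θ] [StandardBorelSpace Θ]
    [MeasurableSpace 𝒲] [StandardBorelSpace 𝒲]
    [MeasurableSpace 𝒳₁] [StandardBorelSpace 𝒳₁]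
    [MeasurableSpace 𝒳₂] [StandardBorelSpace 𝒳₂]
    [MeasurableSpace 𝒯] [StandardBorelSpace 𝒯]
    (μ : Measure Ω) [IsProbabilityMeasure μ]
    (θ : Ω → Θ) (W : Ω → 𝒲) (X₁ : Ω → 𝒳₁) (X₂ : Ω → 𝒳₂) (T : 𝒳₁ × 𝒳₂ → 𝒯)
    (hθ : Measurable θ) (hW : Measurable W) (hX₁ : Measurable X₁) (hX₂ : Measurable X₂)
    (hT : Measurable T)
    -- θ and (X₁, X₂) are conditionally independent given W
    (hθW : CondIndepFun (MeasurableSpace.comap W inferInstance) hW.comap_le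
      θ (fun ω => (X₁ ω, X₂ ω)) μ)
    -- W and (X₁, X₂) are conditionally independent given T(X₁, X₂)
    (hWT : CondIndepFun
      (MeasurableSpace.comap (fun ω => T (X₁ ω, X₂ ω)) inferInstance)
      ((hT.comp (hX₁.prodMk hX₂)).comap_le)
      W (fun ω => (X₁ ω, X₂ ω)) μ) :
    -- θ and (X₁, X₂) are conditionally independent given T(X₁, X₂)
    CondIndepFun
      (MeasurableSpace.comap (fun ω => T (X₁ ω, X₂ ω)) inferInstance)
      ((hT.comp (hX₁.prodMk hX₂)).comap_le)
      θ (fun ω => (X₁ ω, X₂ ω)) μ :=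
  sufficient_for_hidden_implies_sufficient_general μ θ W X₁ X₂ T hθ hW hX₁ hX₂ hT hθW hWT
end

section
/- Corollary 1 (HCI model: local sufficiency with respect to the hidden variable implies global sufficiency): Let θ, W, X1, X2 be random variables taking values in finite sets satisfying the HCI conditions: X1 and X2 are conditionally independent given W, and θ and (X1, X2) are conditionally independent given W. If for i = 1, 2 the statistic Ti(Xi) is locally sufficient for W, i.e., W and Xi are conditionally independent given Ti(Xi), then θ and (X1, X2) are conditionally independent given the pair (T1(X1), T2(X2)). -/
/-! Since `T = (T₁(X₁), T₂(X₂))` is a function of `X = (X₁, X₂)`, it suffices that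
`P(θ ∈ s | X = x)` depends on `x` only through `t = T(x)`. Conditioning on the hidden `W`,
`P(θ ∈ s | X = x) = ∑_w P(θ ∈ s | w) P(w | x)`, and the HCI factorisation together with local
sufficiency gives, as functions of `w`,
`P(w | x) ∝ P(w | x₁) P(w | x₂) / P(w) = P(w | t₁) P(w | t₂) / P(w) ∝ P(w | t)`.
Both sides are probability distributions in `w`, so `P(w | x) = P(w | t)`. -/

open MeasureTheory ProbabilityTheory

section DiscreteConditioning

variable {Ω 𝒵 : Type*} {mΩ : MeasurableSpace Ω} [MeasurableSpace 𝒵] [MeasurableSingletonClass 𝒵]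
  {μ : Measure Ω} {Z : Ω → 𝒵}

lemma sum_measureReal_inter_preimage_singleton [Fintype 𝒵] [IsFiniteMeasure μ]
    (hZ : Measurable Z) (E : Set Ω) : ∑ z, μ.real (E ∩ Z ⁻¹' {z}) = μ.real E := by
  have h := sum_measureReal_preimage_singleton (μ := μ.restrict E) Finset.univ
    (fun z _ => hZ (measurableSet_singleton z))
  simpa [measureReal_restrict_apply (hZ (measurableSet_singleton _)), Set.inter_comm] using h

lemma comp_ae_eq_comp_iff [Countable 𝒵] {β : Type*} (hZ : Measurable Z) {F G : 𝒵 → β} :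
    F ∘ Z =ᵐ[μ] G ∘ Z ↔ ∀ z, μ (Z ⁻¹' {z}) ≠ 0 → F z = G z := by
  change (∀ᵐ ω ∂μ, F (Z ω) = G (Z ω)) ↔ _
  rw [← ae_map_iff (p := fun z => F z = G z) hZ.aemeasurable (Set.to_countable _).measurableSet,
    ae_iff_of_countable]
  simp only [Measure.map_apply hZ (measurableSet_singleton _)]

/-- On null fibers the right-hand side is `0`, by the convention `x / 0 = 0`. -/
lemma condExp_comap_ae_eq [Fintype 𝒵] [IsFiniteMeasure μ] (hZ : Measurable Z) {A : Set Ω}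
    (hA : MeasurableSet A) :
    μ⟦A | MeasurableSpace.comap Z inferInstance⟧ =ᵐ[μ]
      (fun z => μ.real (A ∩ Z ⁻¹' {z}) / μ.real (Z ⁻¹' {z})) ∘ Z := by
  set F : 𝒵 → ℝ := fun z => μ.real (A ∩ Z ⁻¹' {z}) / μ.real (Z ⁻¹' {z})
  have hF : Integrable F (μ.map Z) := .of_finite
  refine (ae_eq_condExp_of_forall_setIntegral_eq hZ.comap_le
    ((integrable_const 1).indicator hA) (fun _ _ _ => (hF.comp_measurable hZ).integrableOn)
    ?_ ?_).symm
  · rintro - ⟨u, hu, rfl⟩ -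
    have hfiber (z : 𝒵) :
        ((μ.map Z).restrict u).real {z} * F z = μ.real (A ∩ Z ⁻¹' u ∩ Z ⁻¹' {z}) := by
      rw [measureReal_restrict_apply (measurableSet_singleton z),
        map_measureReal_apply hZ ((measurableSet_singleton z).inter hu)]
      by_cases hz : z ∈ u
      · rw [Set.singleton_inter_of_mem hz, Set.inter_assoc, ← Set.preimage_inter,
          Set.inter_eq_right.2 (Set.singleton_subset_iff.2 hz)]
        exact mul_div_cancel_of_imp' fun h => measureReal_mono_null Set.inter_subset_right h
      · simp [Set.singleton_inter_of_notMem hz, Set.inter_assoc, ← Set.preimage_inter,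
          Set.inter_singleton_eq_empty.2 hz]
    change ∫ ω in Z ⁻¹' u, F (Z ω) ∂μ = _
    rw [← setIntegral_map hu hF.aestronglyMeasurable hZ.aemeasurable,
      integral_fintype hF.restrict, setIntegral_indicator hA]
    simp only [smul_eq_mul, hfiber, sum_measureReal_inter_preimage_singleton hZ]
    rw [setIntegral_const, smul_eq_mul, mul_one, Set.inter_comm]
  · exact ((measurable_of_finite F).comp (Measurable.of_comap_le le_rfl)).aestronglyMeasurable

lemma condIndepSet_comap_iff [Fintype 𝒵] [IsFiniteMeasure μ] [StandardBorelSpace Ω]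
    (hZ : Measurable Z) {s t : Set Ω} (hs : MeasurableSet s) (ht : MeasurableSet t) :
    CondIndepSet (MeasurableSpace.comap Z inferInstance) hZ.comap_le s t μ ↔
      ∀ z, μ.real (s ∩ t ∩ Z ⁻¹' {z}) * μ.real (Z ⁻¹' {z})
        = μ.real (s ∩ Z ⁻¹' {z}) * μ.real (t ∩ Z ⁻¹' {z}) := by
  rw [condIndepSet_iff _ _ _ _ hs ht, (condExp_comap_ae_eq hZ (hs.inter ht)).congr_left,
    ((condExp_comap_ae_eq hZ hs).mul (condExp_comap_ae_eq hZ ht)).congr_right,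
    ← Pi.mul_comp, comp_ae_eq_comp_iff hZ]
  refine forall_congr' fun z => ?_
  by_cases hz : μ (Z ⁻¹' {z}) = 0
  · have hnull {E : Set Ω} : μ.real (E ∩ Z ⁻¹' {z}) = 0 :=
      measureReal_mono_null Set.inter_subset_right
        ((measureReal_eq_zero_iff (measure_ne_top μ _)).2 hz)
    simp [hz, hnull]
  · have hz' : μ.real (Z ⁻¹' {z}) ≠ 0 := (measureReal_ne_zero_iff (measure_ne_top μ _)).2 hz
    simp only [Pi.mul_apply, hz, ne_eq, not_false_eq_true, forall_const]
    rw [div_mul_div_comm, div_eq_div_iff hz' (mul_ne_zero hz' hz')]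
    constructor <;> intro h
    · exact mul_right_cancel₀ hz' (by linear_combination h)
    · linear_combination μ.real (Z ⁻¹' {z}) * h

lemma condIndepFun_comap_iff [Fintype 𝒵] [IsFiniteMeasure μ] [StandardBorelSpace Ω]
    {β γ : Type*} [MeasurableSpace β] [MeasurableSpace γ] {f : Ω → β} {g : Ω → γ}
    (hZ : Measurable Z) (hf : Measurable f) (hg : Measurable g) :
    CondIndepFun (MeasurableSpace.comap Z inferInstance) hZ.comap_le f g μ ↔
      ∀ s t, MeasurableSet s → MeasurableSet t → ∀ z,
        μ.real (f ⁻¹' s ∩ g ⁻¹' t ∩ Z ⁻¹' {z}) * μ.real (Z ⁻¹' {z})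
          = μ.real (f ⁻¹' s ∩ Z ⁻¹' {z}) * μ.real (g ⁻¹' t ∩ Z ⁻¹' {z}) := by
  rw [condIndepFun_iff_condIndepSet_preimage hf hg]
  exact forall₄_congr fun s t hs ht => condIndepSet_comap_iff hZ (hf hs) (hg ht)

lemma condIndepFun_comap_iff_forall_singleton [Fintype 𝒵] [IsFiniteMeasure μ]
    [StandardBorelSpace Ω] {β γ : Type*} [MeasurableSpace β] [MeasurableSpace γ] [Fintype γ]
    [MeasurableSingletonClass γ] {f : Ω → β} {g : Ω → γ} {φ : γ → 𝒵} (hZ : Measurable Z)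
    (hf : Measurable f) (hg : Measurable g) (hZg : ∀ ω, Z ω = φ (g ω)) :
    CondIndepFun (MeasurableSpace.comap Z inferInstance) hZ.comap_le f g μ ↔
      ∀ s, MeasurableSet s → ∀ y,
        μ.real (f ⁻¹' s ∩ g ⁻¹' {y}) * μ.real (Z ⁻¹' {φ y})
          = μ.real (f ⁻¹' s ∩ Z ⁻¹' {φ y}) * μ.real (g ⁻¹' {y}) := by
  have hsub (y : γ) : g ⁻¹' {y} ⊆ Z ⁻¹' {φ y} := fun ω hω => by simp_all
  rw [condIndepFun_comap_iff hZ hf hg]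
  constructor
  · intro h s hs y
    simpa [Set.inter_assoc, Set.inter_eq_left.2 (hsub y)] using
      h s {y} hs (measurableSet_singleton y) (φ y)
  · intro h s t hs _ z
    classical
    have hsplit (E : Set Ω) : μ.real (E ∩ g ⁻¹' t ∩ Z ⁻¹' {z})
        = ∑ y, if y ∈ t ∧ φ y = z then μ.real (E ∩ g ⁻¹' {y}) else 0 := by
      rw [← sum_measureReal_inter_preimage_singleton hg]
      refine Finset.sum_congr rfl fun y _ => ?_
      split_ifs with hy
      · congr 1
        ext ω
        simp only [Set.mem_inter_iff, Set.mem_preimage, Set.mem_singleton_iff, hZg]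
        grind
      · convert measureReal_empty (μ := μ)
        ext ω
        simp only [Set.mem_inter_iff, Set.mem_preimage, Set.mem_singleton_iff, hZg]
        grind
    rw [hsplit, ← Set.univ_inter (g ⁻¹' t), hsplit, Finset.sum_mul, Finset.mul_sum]
    refine Finset.sum_congr rfl fun y _ => ?_
    split_ifs with hy
    · obtain ⟨-, rfl⟩ := hy
      simpa using h s hs y
    · simp

end DiscreteConditioning

section HiddenVariable

variable {Ω : Type*} {mΩ : MeasurableSpace Ω} {μ : Measure Ω} [IsFiniteMeasure μ]
  {A B₁ B₂ D₁ D₂ : Set Ω}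

/-- With `Bᵢ = {Xᵢ = xᵢ}`, `Dᵢ = {Tᵢ(Xᵢ) = tᵢ}` and `V = {W = w}`: the ratio
`P(x₁, x₂, w) / P(t₁, t₂, w)` does not depend on `w`. -/
lemma measureReal_inter_mul_eq_of_condIndep_of_sufficient {V : Set Ω}
    (hB : μ.real (B₁ ∩ B₂ ∩ V) * μ.real V = μ.real (B₁ ∩ V) * μ.real (B₂ ∩ V))
    (hD : μ.real (D₁ ∩ D₂ ∩ V) * μ.real V = μ.real (D₁ ∩ V) * μ.real (D₂ ∩ V))
    (h₁ : μ.real (V ∩ B₁) * μ.real D₁ = μ.real (V ∩ D₁) * μ.real B₁)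
    (h₂ : μ.real (V ∩ B₂) * μ.real D₂ = μ.real (V ∩ D₂) * μ.real B₂) :
    μ.real (B₁ ∩ B₂ ∩ V) * (μ.real D₁ * μ.real D₂)
      = μ.real B₁ * μ.real B₂ * μ.real (D₁ ∩ D₂ ∩ V) := by
  rcases eq_or_ne (μ.real V) 0 with hV | hV
  · simp [measureReal_mono_null Set.inter_subset_right hV]
  refine mul_right_cancel₀ hV ?_
  rw [Set.inter_comm V B₁, Set.inter_comm V D₁] at h₁
  rw [Set.inter_comm V B₂, Set.inter_comm V D₂] at h₂
  linear_combination μ.real D₁ * μ.real D₂ * hB + μ.real (B₂ ∩ V) * μ.real D₂ * h₁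
    + μ.real (D₁ ∩ V) * μ.real B₁ * h₂ - μ.real B₁ * μ.real B₂ * hD

lemma measureReal_inter_mul_eq_of_hci {𝒲 : Type*} [Fintype 𝒲] [MeasurableSpace 𝒲]
    [MeasurableSingletonClass 𝒲] {W : Ω → 𝒲} (hW : Measurable W) (hB₁ : B₁ ⊆ D₁)
    (hB₂ : B₂ ⊆ D₂)
    (hB : ∀ w, μ.real (B₁ ∩ B₂ ∩ W ⁻¹' {w}) * μ.real (W ⁻¹' {w})
      = μ.real (B₁ ∩ W ⁻¹' {w}) * μ.real (B₂ ∩ W ⁻¹' {w}))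
    (hD : ∀ w, μ.real (D₁ ∩ D₂ ∩ W ⁻¹' {w}) * μ.real (W ⁻¹' {w})
      = μ.real (D₁ ∩ W ⁻¹' {w}) * μ.real (D₂ ∩ W ⁻¹' {w}))
    (hAB : ∀ w, μ.real (A ∩ (B₁ ∩ B₂) ∩ W ⁻¹' {w}) * μ.real (W ⁻¹' {w})
      = μ.real (A ∩ W ⁻¹' {w}) * μ.real (B₁ ∩ B₂ ∩ W ⁻¹' {w}))
    (hAD : ∀ w, μ.real (A ∩ (D₁ ∩ D₂) ∩ W ⁻¹' {w}) * μ.real (W ⁻¹' {w})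
      = μ.real (A ∩ W ⁻¹' {w}) * μ.real (D₁ ∩ D₂ ∩ W ⁻¹' {w}))
    (h₁ : ∀ w, μ.real (W ⁻¹' {w} ∩ B₁) * μ.real D₁ = μ.real (W ⁻¹' {w} ∩ D₁) * μ.real B₁)
    (h₂ : ∀ w, μ.real (W ⁻¹' {w} ∩ B₂) * μ.real D₂ = μ.real (W ⁻¹' {w} ∩ D₂) * μ.real B₂) :
    μ.real (A ∩ (B₁ ∩ B₂)) * μ.real (D₁ ∩ D₂) = μ.real (A ∩ (D₁ ∩ D₂)) * μ.real (B₁ ∩ B₂) := by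
  have hfiber (w : 𝒲) := measureReal_inter_mul_eq_of_condIndep_of_sufficient (hB w) (hD w)
    (h₁ w) (h₂ w)
  have hAfiber (w : 𝒲) : μ.real (A ∩ (B₁ ∩ B₂) ∩ W ⁻¹' {w}) * (μ.real D₁ * μ.real D₂)
      = μ.real B₁ * μ.real B₂ * μ.real (A ∩ (D₁ ∩ D₂) ∩ W ⁻¹' {w}) := by
    rcases eq_or_ne (μ.real (W ⁻¹' {w})) 0 with hw | hw
    · simp [measureReal_mono_null Set.inter_subset_right hw]
    refine mul_right_cancel₀ hw ?_
    linear_combination μ.real D₁ * μ.real D₂ * hAB w + μ.real (A ∩ W ⁻¹' {w}) * hfiber w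
      - μ.real B₁ * μ.real B₂ * hAD w
  have hsum {E F : Set Ω} (h : ∀ w, μ.real (E ∩ W ⁻¹' {w}) * (μ.real D₁ * μ.real D₂)
      = μ.real B₁ * μ.real B₂ * μ.real (F ∩ W ⁻¹' {w})) :
      μ.real E * (μ.real D₁ * μ.real D₂) = μ.real B₁ * μ.real B₂ * μ.real F := by
    rw [← sum_measureReal_inter_preimage_singleton hW E,
      ← sum_measureReal_inter_preimage_singleton hW F, Finset.sum_mul, Finset.mul_sum]
    exact Finset.sum_congr rfl fun w _ => h w
  have hA := hsum hAfiber
  have hBD := hsum hfiber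
  rcases eq_or_ne (μ.real D₁ * μ.real D₂) 0 with hD₀ | hD₀
  · have hnull : μ.real (B₁ ∩ B₂) = 0 := by
      rcases mul_eq_zero.1 hD₀ with h | h
      · exact measureReal_mono_null (Set.inter_subset_left.trans hB₁) h
      · exact measureReal_mono_null (Set.inter_subset_right.trans hB₂) h
    simp [hnull, measureReal_mono_null Set.inter_subset_right hnull]
  refine mul_right_cancel₀ hD₀ ?_
  linear_combination μ.real (D₁ ∩ D₂) * hA - μ.real (A ∩ (D₁ ∩ D₂)) * hBD

end HiddenVariable

theorem hci_local_sufficiency_implies_global_sufficiency_general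
    {Ω Θ 𝒲 𝒳₁ 𝒳₂ 𝒯₁ 𝒯₂ : Type*}
    [MeasurableSpace Ω] [StandardBorelSpace Ω]
    [MeasurableSpace Θ]
    [Fintype 𝒲] [MeasurableSpace 𝒲] [MeasurableSingletonClass 𝒲]
    [Fintype 𝒳₁] [MeasurableSpace 𝒳₁] [MeasurableSingletonClass 𝒳₁]
    [Fintype 𝒳₂] [MeasurableSpace 𝒳₂] [MeasurableSingletonClass 𝒳₂]
    [Fintype 𝒯₁] [MeasurableSpace 𝒯₁] [MeasurableSingletonClass 𝒯₁]
    [Fintype 𝒯₂] [MeasurableSpace 𝒯₂] [MeasurableSingletonClass 𝒯₂]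
    (μ : Measure Ω) [IsProbabilityMeasure μ]
    (θ : Ω → Θ) (W : Ω → 𝒲) (X₁ : Ω → 𝒳₁) (X₂ : Ω → 𝒳₂)
    (T₁ : 𝒳₁ → 𝒯₁) (T₂ : 𝒳₂ → 𝒯₂)
    (hθ : Measurable θ) (hW : Measurable W) (hX₁ : Measurable X₁) (hX₂ : Measurable X₂)
    (hT₁ : Measurable T₁) (hT₂ : Measurable T₂)
    -- HCI: X₁ and X₂ are conditionally independent given W
    (hci : CondIndepFun (MeasurableSpace.comap W inferInstance) hW.comap_le X₁ X₂ μ)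
    -- HCI: θ and (X₁, X₂) are conditionally independent given W
    (hθW : CondIndepFun (MeasurableSpace.comap W inferInstance) hW.comap_le
      θ (fun ω => (X₁ ω, X₂ ω)) μ)
    -- Tᵢ(Xᵢ) is locally sufficient for W, i = 1, 2
    (hloc₁ : CondIndepFun (MeasurableSpace.comap (fun ω => T₁ (X₁ ω)) inferInstance)
      ((hT₁.comp hX₁).comap_le) W X₁ μ)
    (hloc₂ : CondIndepFun (MeasurableSpace.comap (fun ω => T₂ (X₂ ω)) inferInstance)
      ((hT₂.comp hX₂).comap_le) W X₂ μ) :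
    -- θ and (X₁, X₂) are conditionally independent given (T₁(X₁), T₂(X₂))
    CondIndepFun
      (MeasurableSpace.comap (fun ω => (T₁ (X₁ ω), T₂ (X₂ ω))) inferInstance)
      (((hT₁.comp hX₁).prodMk (hT₂.comp hX₂)).comap_le)
      θ (fun ω => (X₁ ω, X₂ ω)) μ := by
  have hX : Measurable fun ω => (X₁ ω, X₂ ω) := hX₁.prodMk hX₂
  have hWX := (condIndepFun_comap_iff hW hX₁ hX₂).1 hci
  have hWθ := (condIndepFun_comap_iff hW hθ hX).1 hθW
  have hsuff₁ := (condIndepFun_comap_iff_forall_singleton (φ := T₁) (hT₁.comp hX₁) hW hX₁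
    fun _ => rfl).1 hloc₁
  have hsuff₂ := (condIndepFun_comap_iff_forall_singleton (φ := T₂) (hT₂.comp hX₂) hW hX₂
    fun _ => rfl).1 hloc₂
  refine (condIndepFun_comap_iff_forall_singleton (φ := Prod.map T₁ T₂)
    ((hT₁.comp hX₁).prodMk (hT₂.comp hX₂)) hθ hX fun _ => rfl).2 ?_
  rintro s hs ⟨x₁, x₂⟩
  simp only [Prod.map, ← Set.singleton_prod_singleton, Set.mk_preimage_prod]
  have hx₁ := measurableSet_singleton x₁
  have hx₂ := measurableSet_singleton x₂
  have ht₁ := hT₁ (measurableSet_singleton (T₁ x₁))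
  have ht₂ := hT₂ (measurableSet_singleton (T₂ x₂))
  refine measureReal_inter_mul_eq_of_hci hW ?_ ?_ (hWX _ _ hx₁ hx₂) (hWX _ _ ht₁ ht₂) ?_ ?_ ?_ ?_
  · exact fun _ => congrArg T₁
  · exact fun _ => congrArg T₂
  · simpa only [Set.mk_preimage_prod] using hWθ s _ hs (hx₁.prod hx₂)
  · simpa only [Set.mk_preimage_prod, Set.preimage_comp] using hWθ s _ hs (ht₁.prod ht₂)
  · exact fun w => hsuff₁ {w} (measurableSet_singleton w) x₁
  · exact fun w => hsuff₂ {w} (measurableSet_singleton w) x₂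

/-- **Corollary 1 (HCI model).** Suppose `X₁` and `X₂` are conditionally independent given the
hidden variable `W`, and `θ` and `(X₁, X₂)` are conditionally independent given `W`. If for
`i = 1, 2` the statistic `Tᵢ(Xᵢ)` is locally sufficient for `W` (i.e., `W` and `Xᵢ` are
conditionally independent given `Tᵢ(Xᵢ)`), then `θ` and `(X₁, X₂)` are conditionally
independent given `(T₁(X₁), T₂(X₂))`. -/
theorem hci_local_sufficiency_implies_global_sufficiency
    {Ω Θ 𝒲 𝒳₁ 𝒳₂ 𝒯₁ 𝒯₂ : Type*}
    [MeasurableSpace Ω] [StandardBorelSpace Ω] [Nonempty Ω] [Fintype Ω]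
    [Fintype Θ] [MeasurableSpace Θ] [MeasurableSingletonClass Θ]
    [Fintype 𝒲] [MeasurableSpace 𝒲] [MeasurableSingletonClass 𝒲]
    [Fintype 𝒳₁] [MeasurableSpace 𝒳₁] [MeasurableSingletonClass 𝒳₁]
    [Fintype 𝒳₂] [MeasurableSpace 𝒳₂] [MeasurableSingletonClass 𝒳₂]
    [Fintype 𝒯₁] [MeasurableSpace 𝒯₁] [MeasurableSingletonClass 𝒯₁]
    [Fintype 𝒯₂] [MeasurableSpace 𝒯₂] [MeasurableSingletonClass 𝒯₂]
    (μ : Measure Ω) [IsProbabilityMeasure μ]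
    (θ : Ω → Θ) (W : Ω → 𝒲) (X₁ : Ω → 𝒳₁) (X₂ : Ω → 𝒳₂)
    (T₁ : 𝒳₁ → 𝒯₁) (T₂ : 𝒳₂ → 𝒯₂)
    (hθ : Measurable θ) (hW : Measurable W) (hX₁ : Measurable X₁) (hX₂ : Measurable X₂)
    (hT₁ : Measurable T₁) (hT₂ : Measurable T₂)
    -- HCI: X₁ and X₂ are conditionally independent given W
    (hci : CondIndepFun (MeasurableSpace.comap W inferInstance) hW.comap_le X₁ X₂ μ)
    -- HCI: θ and (X₁, X₂) are conditionally independent given W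
    (hθW : CondIndepFun (MeasurableSpace.comap W inferInstance) hW.comap_le
      θ (fun ω => (X₁ ω, X₂ ω)) μ)
    -- Tᵢ(Xᵢ) is locally sufficient for W, i = 1, 2
    (hloc₁ : CondIndepFun (MeasurableSpace.comap (fun ω => T₁ (X₁ ω)) inferInstance)
      ((hT₁.comp hX₁).comap_le) W X₁ μ)
    (hloc₂ : CondIndepFun (MeasurableSpace.comap (fun ω => T₂ (X₂ ω)) inferInstance)
      ((hT₂.comp hX₂).comap_le) W X₂ μ) :
    -- θ and (X₁, X₂) are conditionally independent given (T₁(X₁), T₂(X₂))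
    CondIndepFun
      (MeasurableSpace.comap (fun ω => (T₁ (X₁ ω), T₂ (X₂ ω))) inferInstance)
      (((hT₁.comp hX₁).prodMk (hT₂.comp hX₂)).comap_le)
      θ (fun ω => (X₁ ω, X₂ ω)) μ :=
  hci_local_sufficiency_implies_global_sufficiency_general μ θ W X₁ X₂ T₁ T₂ hθ hW hX₁ hX₂ hT₁ hT₂
    hci hθW hloc₁ hloc₂
end

section
/- Theorem 4 (optimality of quantizing sufficient statistics under the HCI model): Let θ, W, X1, X2 be random variables taking values in finite sets such that X1 and X2 are conditionally independent given W, θ and (X1, X2) are conditionally independent given W, and for i = 1, 2, W and Xi are conditionally independent given Ti(Xi) (Ti(Xi) locally sufficient for W). Fix L ≥ 1 and a cost d : Θ × Θ̂ → ℝ≥0. Then the minimum over quantizers γ1 : 𝒳1 → {0,…,L−1}, γ2 : 𝒳2 → {0,…,L−1} and estimators h : {0,…,L−1}² → Θ̂ of E[d(θ, h(γ1(X1), γ2(X2)))] equals the minimum over quantizers γ1' : 𝒯1 → {0,…,L−1}, γ2' : 𝒯2 → {0,…,L−1} and estimators h' of E[d(θ, h'(γ1'(T1(X1)), γ2'(T2(X2))))].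 -/
open MeasureTheory ProbabilityTheory
open scoped ENNReal

/-!
Conditional independence given a discrete `Z` is the product rule
`P(f ∈ s, g ∈ t, Z = z) P(Z = z) = P(f ∈ s, Z = z) P(g ∈ t, Z = z)` on each fibre of `Z`.
Applied to the HCI assumptions and to local sufficiency, it factors the joint law as
`P(θ = s, X₁ = x₁, X₂ = x₂) = G(s, T₁ x₁, T₂ x₂) r₁(x₁) r₂(x₂)` with
`G(s, t₁, t₂) = Σ_w P(θ = s, W = w) P(W = w, T₁ = t₁) P(W = w, T₂ = t₂) / P(W = w)²` and
`rᵢ(x) = P(Xᵢ = x) / P(Tᵢ(Xᵢ) = Tᵢ x)`; on null fibres both sides vanish, so the convention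
`0 / 0 = 0` of `ℝ≥0∞` makes this hold everywhere.
The risk of `(γ₁, γ₂, h)` is then `Σ_{x₁, x₂} r₁(x₁) r₂(x₂) M(T₁ x₁, T₂ x₂, γ₁ x₁, γ₂ x₂)`.
For fixed `γ₂` this is a sum over `x₁` of `r₁(x₁)` times a function of `(T₁ x₁, γ₁ x₁)`, so
sending each `x₁` to a minimiser that depends on `T₁ x₁` alone does not increase the risk;
then the same is done for `γ₂`.
-/

namespace ProbabilityTheory

variable {Ω 𝒵 : Type*} {mΩ : MeasurableSpace Ω} [MeasurableSpace 𝒵] [MeasurableSingletonClass 𝒵]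
  {μ : Measure Ω} [IsFiniteMeasure μ] {Z : Ω → 𝒵}

theorem condExp_comap_mul_measureReal_preimage_singleton (hZ : Measurable Z) {A : Set Ω}
    (hA : MeasurableSet A) (ω : Ω) :
    (μ⟦A | MeasurableSpace.comap Z inferInstance⟧) ω * μ.real (Z ⁻¹' {Z ω})
      = μ.real (A ∩ Z ⁻¹' {Z ω}) := by
  set C := Z ⁻¹' {Z ω}
  have hC : MeasurableSet[MeasurableSpace.comap Z inferInstance] C :=
    ⟨_, measurableSet_singleton _, rfl⟩
  have hconst : Set.EqOn (μ⟦A | MeasurableSpace.comap Z inferInstance⟧) (fun _ ↦ _) C :=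
    fun ω' hω' ↦ stronglyMeasurable_condExp.factorsThrough hω'
  calc (μ⟦A | MeasurableSpace.comap Z inferInstance⟧) ω * μ.real C
      = ∫ x in C, (μ⟦A | MeasurableSpace.comap Z inferInstance⟧) x ∂μ := by
        rw [setIntegral_congr_fun (hZ.comap_le _ hC) hconst, setIntegral_const, smul_eq_mul,
          mul_comm]
    _ = ∫ x in C, A.indicator (fun _ ↦ (1 : ℝ)) x ∂μ :=
        setIntegral_condExp hZ.comap_le ((integrable_const 1).indicator hA) hC
    _ = μ.real (A ∩ C) := by
        rw [setIntegral_indicator hA, setIntegral_const, smul_eq_mul, mul_one, Set.inter_comm]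

variable [StandardBorelSpace Ω] {β γ : Type*} [MeasurableSpace β] [MeasurableSpace γ]
  {f : Ω → β} {g : Ω → γ}

theorem CondIndepFun.measure_inter_preimage_singleton (hZ : Measurable Z)
    (hf : Measurable f) (hg : Measurable g) (hfg : f ⟂ᵢ[Z, hZ; μ] g)
    {s : Set β} {t : Set γ} (hs : MeasurableSet s) (ht : MeasurableSet t) (z : 𝒵) :
    μ (f ⁻¹' s ∩ g ⁻¹' t ∩ Z ⁻¹' {z})
      = μ (f ⁻¹' s ∩ Z ⁻¹' {z}) * μ (g ⁻¹' t ∩ Z ⁻¹' {z}) / μ (Z ⁻¹' {z}) := by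
  by_cases hC : μ (Z ⁻¹' {z}) = 0
  · rw [measure_mono_null Set.inter_subset_right hC,
      measure_mono_null Set.inter_subset_right hC, zero_mul, ENNReal.zero_div]
  rw [ENNReal.eq_div_iff hC (measure_ne_top _ _), ← ENNReal.toReal_eq_toReal_iff'
    (by finiteness) (by finiteness), ENNReal.toReal_mul, ENNReal.toReal_mul]
  simp only [← measureReal_def]
  have hprod := (condIndepFun_iff_condExp_inter_preimage_eq_mul hf hg).mp hfg s t hs ht
  obtain ⟨ω, hω, hprodω⟩ :=
    Measure.exists_mem_of_measure_ne_zero_of_ae hC (ae_restrict_of_ae hprod)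
  obtain rfl : Z ω = z := hω
  have fiber {A : Set Ω} (hA : MeasurableSet A) :=
    condExp_comap_mul_measureReal_preimage_singleton (μ := μ) hZ hA ω
  rw [← fiber (hf hs), ← fiber (hg ht), ← fiber ((hf hs).inter (hg ht)), hprodω]
  ring

theorem CondIndepFun.measure_inter_preimage_singleton_of_statistic {𝒳 𝒯 𝒲 : Type*}
    [MeasurableSpace 𝒳] [MeasurableSpace 𝒯] [MeasurableSingletonClass 𝒯]
    [MeasurableSpace 𝒲] [MeasurableSingletonClass 𝒲] [MeasurableSingletonClass 𝒳]
    {W : Ω → 𝒲} {X : Ω → 𝒳} {T : 𝒳 → 𝒯} (hW : Measurable W) (hX : Measurable X)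
    (hTX : Measurable fun ω ↦ T (X ω)) (hsuff : W ⟂ᵢ[fun ω ↦ T (X ω), hTX; μ] X) (w : 𝒲) (x : 𝒳) :
    μ (W ⁻¹' {w} ∩ X ⁻¹' {x}) = μ (W ⁻¹' {w} ∩ (fun ω ↦ T (X ω)) ⁻¹' {T x})
      * μ (X ⁻¹' {x}) / μ ((fun ω ↦ T (X ω)) ⁻¹' {T x}) := by
  have hfiber : X ⁻¹' {x} ⊆ (fun ω ↦ T (X ω)) ⁻¹' {T x} := fun ω hω ↦ by
    simp_all
  have h := hsuff.measure_inter_preimage_singleton hTX hW hX (measurableSet_singleton w)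
    (measurableSet_singleton x) (T x)
  rwa [Set.inter_assoc, Set.inter_eq_left.mpr hfiber] at h

end ProbabilityTheory

namespace MeasureTheory

variable {Ω β : Type*} {mΩ : MeasurableSpace Ω} [Fintype β] [MeasurableSpace β]
  [MeasurableSingletonClass β] {μ : Measure Ω} {Y : Ω → β}

theorem measure_eq_sum_inter_preimage_singleton (hY : Measurable Y) (E : Set Ω) :
    μ E = ∑ y, μ (E ∩ Y ⁻¹' {y}) := by
  have h := sum_measure_preimage_singleton (μ := μ.restrict E) Finset.univ
    (fun y _ ↦ hY (measurableSet_singleton y))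
  simp only [Finset.coe_univ, Set.preimage_univ, Measure.restrict_apply_univ,
    Measure.restrict_apply (hY (measurableSet_singleton _)), Set.inter_comm] at h
  exact h.symm

theorem lintegral_comp_eq_sum_mul_measure_preimage_singleton (hY : Measurable Y)
    (F : β → ℝ≥0∞) : ∫⁻ ω, F (Y ω) ∂μ = ∑ y, F y * μ (Y ⁻¹' {y}) := by
  rw [← lintegral_map (measurable_of_finite F) hY, lintegral_fintype]
  simp_rw [Measure.map_apply hY (measurableSet_singleton _)]

end MeasureTheory

section Quantizers

variable {ι₁ ι₂ τ₁ τ₂ α₁ α₂ : Type*} [Fintype ι₁] [Fintype ι₂]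
  [Finite α₁] [Nonempty α₁] [Finite α₂] [Nonempty α₂]

theorem exists_sum_mul_comp_le (T : ι₁ → τ₁) (r : ι₁ → ℝ≥0∞) (F : τ₁ → α₁ → ℝ≥0∞)
    (γ : ι₁ → α₁) : ∃ γ' : τ₁ → α₁, ∑ i, r i * F (T i) (γ' (T i)) ≤ ∑ i, r i * F (T i) (γ i) := by
  choose γ' hγ' using fun t ↦ Finite.exists_min (F t)
  exact ⟨γ', Finset.sum_le_sum fun i _ ↦ mul_le_mul_right (hγ' _ _) _⟩

theorem exists_sum_sum_mul_comp_le (T₁ : ι₁ → τ₁) (T₂ : ι₂ → τ₂) (r₁ : ι₁ → ℝ≥0∞)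
    (r₂ : ι₂ → ℝ≥0∞) (M : τ₁ → τ₂ → α₁ → α₂ → ℝ≥0∞) (γ₁ : ι₁ → α₁) (γ₂ : ι₂ → α₂) :
    ∃ (γ₁' : τ₁ → α₁) (γ₂' : τ₂ → α₂),
      ∑ i, ∑ j, r₁ i * r₂ j * M (T₁ i) (T₂ j) (γ₁' (T₁ i)) (γ₂' (T₂ j))
        ≤ ∑ i, ∑ j, r₁ i * r₂ j * M (T₁ i) (T₂ j) (γ₁ i) (γ₂ j) := by
  have sum_left : ∀ (k₁ : ι₁ → α₁) (k₂ : ι₂ → α₂),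
      ∑ i, ∑ j, r₁ i * r₂ j * M (T₁ i) (T₂ j) (k₁ i) (k₂ j)
        = ∑ i, r₁ i * ∑ j, r₂ j * M (T₁ i) (T₂ j) (k₁ i) (k₂ j) := by
    intro k₁ k₂
    simp only [Finset.mul_sum, mul_assoc]
  have sum_right : ∀ (k₁ : ι₁ → α₁) (k₂ : ι₂ → α₂),
      ∑ i, ∑ j, r₁ i * r₂ j * M (T₁ i) (T₂ j) (k₁ i) (k₂ j)
        = ∑ j, r₂ j * ∑ i, r₁ i * M (T₁ i) (T₂ j) (k₁ i) (k₂ j) := by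
    intro k₁ k₂
    rw [Finset.sum_comm]
    simp only [Finset.mul_sum]
    exact Finset.sum_congr rfl fun _ _ ↦ Finset.sum_congr rfl fun _ _ ↦ by ring
  obtain ⟨γ₁', hγ₁'⟩ := exists_sum_mul_comp_le T₁ r₁
    (fun t a ↦ ∑ j, r₂ j * M t (T₂ j) a (γ₂ j)) γ₁
  obtain ⟨γ₂', hγ₂'⟩ := exists_sum_mul_comp_le T₂ r₂
    (fun t b ↦ ∑ i, r₁ i * M (T₁ i) t (γ₁' (T₁ i)) b) γ₂
  refine ⟨γ₁', γ₂', ?_⟩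
  calc _ ≤ ∑ i, ∑ j, r₁ i * r₂ j * M (T₁ i) (T₂ j) (γ₁' (T₁ i)) (γ₂ j) := by
        rw [sum_right, sum_right]; exact hγ₂'
    _ ≤ _ := by
        rw [sum_left, sum_left]; exact hγ₁'

end Quantizers

section HCI

variable {Ω Θ 𝒲 𝒳₁ 𝒳₂ 𝒯₁ 𝒯₂ : Type*} {mΩ : MeasurableSpace Ω} {μ : Measure Ω}
  [MeasurableSpace Θ] [MeasurableSingletonClass Θ]
  [MeasurableSpace 𝒳₁] [MeasurableSingletonClass 𝒳₁]
  [MeasurableSpace 𝒳₂] [MeasurableSingletonClass 𝒳₂]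
  {θ : Ω → Θ} {X₁ : Ω → 𝒳₁} {X₂ : Ω → 𝒳₂} {T₁ : 𝒳₁ → 𝒯₁} {T₂ : 𝒳₂ → 𝒯₂}

theorem exists_measure_preimage_eq_mul_of_hci [StandardBorelSpace Ω] [IsFiniteMeasure μ]
    [Fintype 𝒲] [MeasurableSpace 𝒲] [MeasurableSingletonClass 𝒲]
    [MeasurableSpace 𝒯₁] [MeasurableSingletonClass 𝒯₁]
    [MeasurableSpace 𝒯₂] [MeasurableSingletonClass 𝒯₂] {W : Ω → 𝒲}
    (hθ : Measurable θ) (hW : Measurable W) (hX₁ : Measurable X₁) (hX₂ : Measurable X₂)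
    (hTX₁ : Measurable fun ω ↦ T₁ (X₁ ω)) (hTX₂ : Measurable fun ω ↦ T₂ (X₂ ω))
    (hX₁X₂ : X₁ ⟂ᵢ[W, hW; μ] X₂) (hθX : θ ⟂ᵢ[W, hW; μ] fun ω ↦ (X₁ ω, X₂ ω))
    (hsuff₁ : W ⟂ᵢ[fun ω ↦ T₁ (X₁ ω), hTX₁; μ] X₁)
    (hsuff₂ : W ⟂ᵢ[fun ω ↦ T₂ (X₂ ω), hTX₂; μ] X₂) :
    ∃ (G : Θ → 𝒯₁ → 𝒯₂ → ℝ≥0∞) (r₁ : 𝒳₁ → ℝ≥0∞) (r₂ : 𝒳₂ → ℝ≥0∞), ∀ s x₁ x₂,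
      μ (θ ⁻¹' {s} ∩ (X₁ ⁻¹' {x₁} ∩ X₂ ⁻¹' {x₂})) = G s (T₁ x₁) (T₂ x₂) * r₁ x₁ * r₂ x₂ := by
  refine ⟨fun s t₁ t₂ ↦ ∑ w, μ (θ ⁻¹' {s} ∩ W ⁻¹' {w})
      * μ (W ⁻¹' {w} ∩ (fun ω ↦ T₁ (X₁ ω)) ⁻¹' {t₁})
      * μ (W ⁻¹' {w} ∩ (fun ω ↦ T₂ (X₂ ω)) ⁻¹' {t₂}) / μ (W ⁻¹' {w}) / μ (W ⁻¹' {w}),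
    fun x₁ ↦ μ (X₁ ⁻¹' {x₁}) / μ ((fun ω ↦ T₁ (X₁ ω)) ⁻¹' {T₁ x₁}),
    fun x₂ ↦ μ (X₂ ⁻¹' {x₂}) / μ ((fun ω ↦ T₂ (X₂ ω)) ⁻¹' {T₂ x₂}), fun s x₁ x₂ ↦ ?_⟩
  rw [measure_eq_sum_inter_preimage_singleton hW, Finset.sum_mul, Finset.sum_mul]
  refine Finset.sum_congr rfl fun w _ ↦ ?_
  have hθ_w := hθX.measure_inter_preimage_singleton hW hθ (hX₁.prodMk hX₂)
    (measurableSet_singleton s) ((measurableSet_singleton x₁).prod (measurableSet_singleton x₂)) w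
  have hX_w := hX₁X₂.measure_inter_preimage_singleton hW hX₁ hX₂
    (measurableSet_singleton x₁) (measurableSet_singleton x₂) w
  rw [Set.mk_preimage_prod] at hθ_w
  rw [hθ_w, hX_w, Set.inter_comm (X₁ ⁻¹' _), Set.inter_comm (X₂ ⁻¹' _),
    hsuff₁.measure_inter_preimage_singleton_of_statistic hW hX₁ hTX₁,
    hsuff₂.measure_inter_preimage_singleton_of_statistic hW hX₂ hTX₂]
  simp only [div_eq_mul_inv]
  ring

theorem exists_lintegral_comp_le_of_factorization [Fintype Θ] [Fintype 𝒳₁] [Fintype 𝒳₂]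
    {α₁ α₂ : Type*} [Finite α₁] [Nonempty α₁] [Finite α₂] [Nonempty α₂]
    (hθ : Measurable θ) (hX₁ : Measurable X₁) (hX₂ : Measurable X₂)
    (G : Θ → 𝒯₁ → 𝒯₂ → ℝ≥0∞) (r₁ : 𝒳₁ → ℝ≥0∞) (r₂ : 𝒳₂ → ℝ≥0∞)
    (hfac : ∀ s x₁ x₂,
      μ (θ ⁻¹' {s} ∩ (X₁ ⁻¹' {x₁} ∩ X₂ ⁻¹' {x₂})) = G s (T₁ x₁) (T₂ x₂) * r₁ x₁ * r₂ x₂)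
    (c : Θ → α₁ → α₂ → ℝ≥0∞) (γ₁ : 𝒳₁ → α₁) (γ₂ : 𝒳₂ → α₂) :
    ∃ (γ₁' : 𝒯₁ → α₁) (γ₂' : 𝒯₂ → α₂),
      ∫⁻ ω, c (θ ω) (γ₁' (T₁ (X₁ ω))) (γ₂' (T₂ (X₂ ω))) ∂μ
        ≤ ∫⁻ ω, c (θ ω) (γ₁ (X₁ ω)) (γ₂ (X₂ ω)) ∂μ := by
  have risk_eq : ∀ (k₁ : 𝒳₁ → α₁) (k₂ : 𝒳₂ → α₂),
      ∫⁻ ω, c (θ ω) (k₁ (X₁ ω)) (k₂ (X₂ ω)) ∂μ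
        = ∑ x₁, ∑ x₂, r₁ x₁ * r₂ x₂ * ∑ s, G s (T₁ x₁) (T₂ x₂) * c s (k₁ x₁) (k₂ x₂) := by
    intro k₁ k₂
    rw [lintegral_comp_eq_sum_mul_measure_preimage_singleton (hθ.prodMk (hX₁.prodMk hX₂))
      (fun p : Θ × 𝒳₁ × 𝒳₂ ↦ c p.1 (k₁ p.2.1) (k₂ p.2.2))]
    have hfiber : ∀ s x₁ x₂, (fun ω ↦ (θ ω, X₁ ω, X₂ ω)) ⁻¹' {(s, x₁, x₂)}
        = θ ⁻¹' {s} ∩ (X₁ ⁻¹' {x₁} ∩ X₂ ⁻¹' {x₂}) := by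
      simp only [← Set.singleton_prod_singleton, Set.mk_preimage_prod, implies_true]
    simp_rw [Fintype.sum_prod_type, hfiber, hfac, Finset.mul_sum]
    rw [Finset.sum_comm]
    refine Finset.sum_congr rfl fun x₁ _ ↦ ?_
    rw [Finset.sum_comm]
    exact Finset.sum_congr rfl fun _ _ ↦ Finset.sum_congr rfl fun _ _ ↦ by ring
  obtain ⟨γ₁', γ₂', hle⟩ := exists_sum_sum_mul_comp_le T₁ T₂ r₁ r₂
    (fun t₁ t₂ a b ↦ ∑ s, G s t₁ t₂ * c s a b) γ₁ γ₂
  exact ⟨γ₁', γ₂', (risk_eq _ _).trans_le (hle.trans_eq (risk_eq _ _).symm)⟩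

end HCI

theorem decentralized_quantization_of_sufficient_statistics_hci_general
    {Ω Θ 𝒲 𝒳₁ 𝒳₂ 𝒯₁ 𝒯₂ ΘHat : Type*}
    [MeasurableSpace Ω] [StandardBorelSpace Ω]
    [Fintype Θ] [MeasurableSpace Θ] [MeasurableSingletonClass Θ]
    [Fintype 𝒲] [MeasurableSpace 𝒲] [MeasurableSingletonClass 𝒲]
    [Fintype 𝒳₁] [MeasurableSpace 𝒳₁] [MeasurableSingletonClass 𝒳₁]
    [Fintype 𝒳₂] [MeasurableSpace 𝒳₂] [MeasurableSingletonClass 𝒳₂]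
    [MeasurableSpace 𝒯₁] [MeasurableSingletonClass 𝒯₁]
    [MeasurableSpace 𝒯₂] [MeasurableSingletonClass 𝒯₂]
    (μ : Measure Ω) [IsProbabilityMeasure μ]
    (θ : Ω → Θ) (W : Ω → 𝒲) (X₁ : Ω → 𝒳₁) (X₂ : Ω → 𝒳₂)
    (T₁ : 𝒳₁ → 𝒯₁) (T₂ : 𝒳₂ → 𝒯₂)
    (hθ : Measurable θ) (hW : Measurable W) (hX₁ : Measurable X₁) (hX₂ : Measurable X₂)
    (hT₁ : Measurable T₁) (hT₂ : Measurable T₂)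
    -- HCI: X₁ and X₂ are conditionally independent given W
    (hci : CondIndepFun (MeasurableSpace.comap W inferInstance) hW.comap_le X₁ X₂ μ)
    -- HCI: θ and (X₁, X₂) are conditionally independent given W
    (hθW : CondIndepFun (MeasurableSpace.comap W inferInstance) hW.comap_le
      θ (fun ω => (X₁ ω, X₂ ω)) μ)
    -- Tᵢ(Xᵢ) is locally sufficient for W, i = 1, 2
    (hloc₁ : CondIndepFun (MeasurableSpace.comap (fun ω => T₁ (X₁ ω)) inferInstance)
      ((hT₁.comp hX₁).comap_le) W X₁ μ)
    (hloc₂ : CondIndepFun (MeasurableSpace.comap (fun ω => T₂ (X₂ ω)) inferInstance)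
      ((hT₂.comp hX₂).comap_le) W X₂ μ)
    (L : ℕ) (hL : 1 ≤ L) (d : Θ × ΘHat → NNReal) :
    (⨅ (γ₁ : 𝒳₁ → Fin L) (γ₂ : 𝒳₂ → Fin L) (h : Fin L × Fin L → ΘHat),
        ∫⁻ ω, (d (θ ω, h (γ₁ (X₁ ω), γ₂ (X₂ ω))) : ℝ≥0∞) ∂μ)
      = ⨅ (γ₁' : 𝒯₁ → Fin L) (γ₂' : 𝒯₂ → Fin L) (h' : Fin L × Fin L → ΘHat),
        ∫⁻ ω, (d (θ ω, h' (γ₁' (T₁ (X₁ ω)), γ₂' (T₂ (X₂ ω)))) : ℝ≥0∞) ∂μ := by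
  have : Nonempty (Fin L) := ⟨⟨0, hL⟩⟩
  obtain ⟨G, r₁, r₂, hfac⟩ := exists_measure_preimage_eq_mul_of_hci hθ hW hX₁ hX₂ (hT₁.comp hX₁)
    (hT₂.comp hX₂) hci hθW hloc₁ hloc₂
  refine le_antisymm ?_ ?_
  · exact le_iInf₂ fun γ₁' γ₂' ↦ le_iInf fun h' ↦
      iInf₂_le_of_le (fun x ↦ γ₁' (T₁ x)) (fun x ↦ γ₂' (T₂ x)) (iInf_le _ h')
  · refine le_iInf₂ fun γ₁ γ₂ ↦ le_iInf fun h ↦ ?_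
    obtain ⟨γ₁', γ₂', hle⟩ := exists_lintegral_comp_le_of_factorization hθ hX₁ hX₂ G r₁ r₂ hfac
      (fun s a b ↦ (d (s, h (a, b)) : ℝ≥0∞)) γ₁ γ₂
    exact (iInf₂_le_of_le γ₁' γ₂' (iInf_le _ h)).trans hle

/-- **Theorem 4 (optimality of quantizing sufficient statistics under the HCI model).**
Suppose `X₁` and `X₂` are conditionally independent given the hidden variable `W`, `θ` and
`(X₁, X₂)` are conditionally independent given `W`, and for `i = 1, 2`, `W` and `Xᵢ` are
conditionally independent given `Tᵢ(Xᵢ)`. Then for any `L ≥ 1` and cost `d`, the minimum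
Bayesian risk over quantizers of the raw data equals the minimum risk over quantizers of the
sufficient statistics `Tᵢ(Xᵢ)`. -/
theorem decentralized_quantization_of_sufficient_statistics_hci
    {Ω Θ 𝒲 𝒳₁ 𝒳₂ 𝒯₁ 𝒯₂ ΘHat : Type*}
    [MeasurableSpace Ω] [StandardBorelSpace Ω] [Nonempty Ω] [Fintype Ω]
    [Fintype Θ] [MeasurableSpace Θ] [MeasurableSingletonClass Θ]
    [Fintype 𝒲] [MeasurableSpace 𝒲] [MeasurableSingletonClass 𝒲]
    [Fintype 𝒳₁] [MeasurableSpace 𝒳₁] [MeasurableSingletonClass 𝒳₁]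
    [Fintype 𝒳₂] [MeasurableSpace 𝒳₂] [MeasurableSingletonClass 𝒳₂]
    [Fintype 𝒯₁] [MeasurableSpace 𝒯₁] [MeasurableSingletonClass 𝒯₁]
    [Fintype 𝒯₂] [MeasurableSpace 𝒯₂] [MeasurableSingletonClass 𝒯₂]
    [Fintype ΘHat]
    (μ : Measure Ω) [IsProbabilityMeasure μ]
    (θ : Ω → Θ) (W : Ω → 𝒲) (X₁ : Ω → 𝒳₁) (X₂ : Ω → 𝒳₂)
    (T₁ : 𝒳₁ → 𝒯₁) (T₂ : 𝒳₂ → 𝒯₂)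
    (hθ : Measurable θ) (hW : Measurable W) (hX₁ : Measurable X₁) (hX₂ : Measurable X₂)
    (hT₁ : Measurable T₁) (hT₂ : Measurable T₂)
    -- HCI: X₁ and X₂ are conditionally independent given W
    (hci : CondIndepFun (MeasurableSpace.comap W inferInstance) hW.comap_le X₁ X₂ μ)
    -- HCI: θ and (X₁, X₂) are conditionally independent given W
    (hθW : CondIndepFun (MeasurableSpace.comap W inferInstance) hW.comap_le
      θ (fun ω => (X₁ ω, X₂ ω)) μ)
    -- Tᵢ(Xᵢ) is locally sufficient for W, i = 1, 2
    (hloc₁ : CondIndepFun (MeasurableSpace.comap (fun ω => T₁ (X₁ ω)) inferInstance)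
      ((hT₁.comp hX₁).comap_le) W X₁ μ)
    (hloc₂ : CondIndepFun (MeasurableSpace.comap (fun ω => T₂ (X₂ ω)) inferInstance)
      ((hT₂.comp hX₂).comap_le) W X₂ μ)
    (L : ℕ) (hL : 1 ≤ L) (d : Θ × ΘHat → NNReal) :
    (⨅ (γ₁ : 𝒳₁ → Fin L) (γ₂ : 𝒳₂ → Fin L) (h : Fin L × Fin L → ΘHat),
        ∫⁻ ω, (d (θ ω, h (γ₁ (X₁ ω), γ₂ (X₂ ω))) : ℝ≥0∞) ∂μ)
      = ⨅ (γ₁' : 𝒯₁ → Fin L) (γ₂' : 𝒯₂ → Fin L) (h' : Fin L × Fin L → ΘHat),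
        ∫⁻ ω, (d (θ ω, h' (γ₁' (T₁ (X₁ ω)), γ₂' (T₂ (X₂ ω)))) : ℝ≥0∞) ∂μ :=
  decentralized_quantization_of_sufficient_statistics_hci_general μ θ W X₁ X₂ T₁ T₂ hθ hW hX₁ hX₂
    hT₁ hT₂ hci hθW hloc₁ hloc₂ L hL d
end

section
/- HCI model implies the factorization of Theorem 5 (easy direction of Proposition 2): Let θ, W, X1, X2 be random variables taking values in finite sets such that X1 and X2 are conditionally independent given W, θ and (X1, X2) are conditionally independent given W, and W and X1 are conditionally independent given T1(X1) for a statistic T1 : 𝒳1 → 𝒯1. Then there exist nonnegative functions g : 𝒳1 → ℝ≥0 and f : 𝒯1 × 𝒳2 × Θ → ℝ≥0 such that the joint probability mass function satisfies p(x1, x2, t) = g(x1) · f(T1(x1), x2, t) for all x1 ∈ 𝒳1, x2 ∈ 𝒳2, t ∈ Θ. -/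
open MeasureTheory ProbabilityTheory
open scoped ENNReal

/-!
Conditional independence given a discrete variable `V` is independence under each elementary
conditional measure `μ[|V ← v]`: a `σ(V)`-measurable conditional expectation is constant on the
fibres of `V`, where it equals the conditional probability. Decomposing over the values of `W`,
`p(x₁, x₂, t) = ∑_w P(W = w) P(θ = t | w) P(X₁ = x₁ | w) P(X₂ = x₂ | w)`, and the third hypothesis
gives `P(W = w, X₁ = x₁) = P(X₁ = x₁) P(W = w | T₁(X₁) = T₁(x₁))`. Hence
`g(x₁) = P(X₁ = x₁)` and `f(τ, x₂, t) = ∑_w P(W = w | T₁(X₁) = τ) P(X₂ = x₂ | w) P(θ = t | w)`.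
-/

namespace ProbabilityTheory

variable {Ω 𝒱 : Type*} {mΩ : MeasurableSpace Ω} [MeasurableSpace 𝒱] [MeasurableSingletonClass 𝒱]
  {μ : Measure Ω} {V : Ω → 𝒱}

lemma setIntegral_preimage_singleton_of_stronglyMeasurable_comap (hV : Measurable V)
    {u : Ω → ℝ} (hu : StronglyMeasurable[MeasurableSpace.comap V inferInstance] u)
    {ω : Ω} {v : 𝒱} (hω : V ω = v) :
    ∫ x in V ⁻¹' {v}, u x ∂μ = μ.real (V ⁻¹' {v}) * u ω := by
  rw [setIntegral_congr_fun (hV (.singleton v))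
      (fun x (hx : V x = v) ↦ hu.factorsThrough (hx.trans hω.symm)),
    setIntegral_const, smul_eq_mul]

lemma condExp_comap_apply_eq_cond_real [IsFiniteMeasure μ] (hV : Measurable V) {E : Set Ω}
    (hE : MeasurableSet E) {ω : Ω} {v : 𝒱} (hω : V ω = v) (hv : μ (V ⁻¹' {v}) ≠ 0) :
    (μ⟦E | MeasurableSpace.comap V inferInstance⟧) ω = (μ[|V ← v]).real E := by
  have hF : MeasurableSet (V ⁻¹' {v}) := hV (.singleton v)
  have hint := setIntegral_condExp (μ := μ) (f := E.indicator (1 : Ω → ℝ)) hV.comap_le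
    ((integrable_const 1).indicator hE) ⟨{v}, .singleton v, rfl⟩
  rw [setIntegral_preimage_singleton_of_stronglyMeasurable_comap hV stronglyMeasurable_condExp hω,
    integral_indicator_one hE, measureReal_restrict_apply hE] at hint
  rw [measureReal_def, cond_apply hF, ENNReal.toReal_mul, ENNReal.toReal_inv, ← measureReal_def,
    ← measureReal_def, Set.inter_comm, ← hint,
    inv_mul_cancel_left₀ ((measureReal_ne_zero_iff (measure_ne_top μ _)).2 hv)]
  rfl

lemma CondIndepFun.indepFun_cond [StandardBorelSpace Ω] [IsFiniteMeasure μ] {β γ : Type*}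
    [MeasurableSpace β] [MeasurableSpace γ] {f : Ω → β} {g : Ω → γ}
    (hV : Measurable V) (hf : Measurable f) (hg : Measurable g)
    (h : CondIndepFun (MeasurableSpace.comap V inferInstance) hV.comap_le f g μ) (v : 𝒱) :
    IndepFun f g μ[|V ← v] := by
  have hF : MeasurableSet (V ⁻¹' {v}) := hV (.singleton v)
  rw [indepFun_iff_measure_inter_preimage_eq_mul]
  intro s t hs ht
  by_cases hv : μ (V ⁻¹' {v}) = 0
  · simp [cond_eq_zero_of_meas_eq_zero hv]
  have hprod := (condIndepFun_iff_condExp_inter_preimage_eq_mul hf hg).1 h s t hs ht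
  have : Filter.NeBot (ae (μ.restrict (V ⁻¹' {v}))) := by
    rw [ae_neBot, Ne, Measure.restrict_eq_zero]; exact hv
  obtain ⟨ω, hω, hprod_ω⟩ := ((ae_restrict_mem hF).and (ae_restrict_of_ae hprod)).exists
  simp only [condExp_comap_apply_eq_cond_real hV (hf hs) hω hv,
    condExp_comap_apply_eq_cond_real hV (hg ht) hω hv,
    condExp_comap_apply_eq_cond_real hV ((hf hs).inter (hg ht)) hω hv, measureReal_def] at hprod_ω
  rwa [← ENNReal.toReal_mul, ENNReal.toReal_eq_toReal_iff' (measure_ne_top _ _)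
    (ENNReal.mul_ne_top (measure_ne_top _ _) (measure_ne_top _ _))] at hprod_ω

lemma measure_inter_eq_mul_cond_of_condIndepFun [StandardBorelSpace Ω] [IsFiniteMeasure μ]
    {𝒳 𝒰 : Type*} [MeasurableSpace 𝒳] [MeasurableSingletonClass 𝒳]
    [MeasurableSpace 𝒰] [MeasurableSingletonClass 𝒰] {X : Ω → 𝒳} {U : Ω → 𝒰}
    (hV : Measurable V) (hX : Measurable X) (hU : Measurable U)
    (h : CondIndepFun (MeasurableSpace.comap U inferInstance) hU.comap_le V X μ)
    {x : 𝒳} {u : 𝒰} (hxu : X ⁻¹' {x} ⊆ U ⁻¹' {u}) (v : 𝒱) :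
    μ (V ⁻¹' {v} ∩ X ⁻¹' {x}) = μ (X ⁻¹' {x}) * μ[V ⁻¹' {v} | U ← u] := by
  have hG : MeasurableSet (U ⁻¹' {u}) := hU (.singleton u)
  calc μ (V ⁻¹' {v} ∩ X ⁻¹' {x})
      = μ[V ⁻¹' {v} ∩ X ⁻¹' {x} | U ← u] * μ (U ⁻¹' {u}) := by
        rw [cond_mul_eq_inter hG, Set.inter_eq_right.2 (Set.inter_subset_right.trans hxu)]
    _ = μ[V ⁻¹' {v} | U ← u] * μ (X ⁻¹' {x}) := by
        rw [(h.indepFun_cond hU hV hX u).measure_inter_preimage_eq_mul _ _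
          (.singleton v) (.singleton x), mul_assoc, cond_mul_eq_inter hG,
          Set.inter_eq_right.2 hxu]
    _ = _ := mul_comm _ _

lemma cond_preimage_inter_preimage_prod_eq_mul [StandardBorelSpace Ω] [IsFiniteMeasure μ]
    {α β γ : Type*} [MeasurableSpace α] [MeasurableSpace β] [MeasurableSpace γ]
    {f : Ω → α} {g : Ω → β} {h : Ω → γ}
    (hV : Measurable V) (hf : Measurable f) (hg : Measurable g) (hh : Measurable h)
    (hf_gh : CondIndepFun (MeasurableSpace.comap V inferInstance) hV.comap_le
      f (fun ω ↦ (g ω, h ω)) μ)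
    (hg_h : CondIndepFun (MeasurableSpace.comap V inferInstance) hV.comap_le g h μ)
    {s : Set α} {t : Set β} {r : Set γ} (hs : MeasurableSet s) (ht : MeasurableSet t)
    (hr : MeasurableSet r) (v : 𝒱) :
    μ[f ⁻¹' s ∩ (fun ω ↦ (g ω, h ω)) ⁻¹' (t ×ˢ r) | V ← v]
      = μ[f ⁻¹' s | V ← v] * (μ[g ⁻¹' t | V ← v] * μ[h ⁻¹' r | V ← v]) := by
  rw [(hf_gh.indepFun_cond hV hf (hg.prodMk hh) v).measure_inter_preimage_eq_mul _ _ hs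
      (ht.prod hr), Set.mk_preimage_prod,
    (hg_h.indepFun_cond hV hg hh v).measure_inter_preimage_eq_mul _ _ ht hr]

end ProbabilityTheory

theorem hci_implies_factorization_general
    {Ω Θ 𝒲 𝒳₁ 𝒳₂ 𝒯₁ : Type*}
    [MeasurableSpace Ω] [StandardBorelSpace Ω]
    [MeasurableSpace Θ] [MeasurableSingletonClass Θ]
    [Fintype 𝒲] [MeasurableSpace 𝒲] [MeasurableSingletonClass 𝒲]
    [MeasurableSpace 𝒳₁] [MeasurableSingletonClass 𝒳₁]
    [MeasurableSpace 𝒳₂] [MeasurableSingletonClass 𝒳₂]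
    [MeasurableSpace 𝒯₁] [MeasurableSingletonClass 𝒯₁]
    (μ : Measure Ω) [IsProbabilityMeasure μ]
    (θ : Ω → Θ) (W : Ω → 𝒲) (X₁ : Ω → 𝒳₁) (X₂ : Ω → 𝒳₂) (T₁ : 𝒳₁ → 𝒯₁)
    (hθ : Measurable θ) (hW : Measurable W) (hX₁ : Measurable X₁) (hX₂ : Measurable X₂)
    (hT₁ : Measurable T₁)
    -- HCI: X₁ and X₂ are conditionally independent given W
    (hci : CondIndepFun (MeasurableSpace.comap W inferInstance) hW.comap_le X₁ X₂ μ)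
    -- HCI: θ and (X₁, X₂) are conditionally independent given W
    (hθW : CondIndepFun (MeasurableSpace.comap W inferInstance) hW.comap_le
      θ (fun ω => (X₁ ω, X₂ ω)) μ)
    -- W and X₁ are conditionally independent given T₁(X₁)
    (hloc₁ : CondIndepFun (MeasurableSpace.comap (fun ω => T₁ (X₁ ω)) inferInstance)
      ((hT₁.comp hX₁).comap_le) W X₁ μ) :
    -- the joint pmf factorizes as p(x₁, x₂, t) = g(x₁) · f(T₁(x₁), x₂, t)
    ∃ (g : 𝒳₁ → NNReal) (f : 𝒯₁ × 𝒳₂ × Θ → NNReal),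
      ∀ (x₁ : 𝒳₁) (x₂ : 𝒳₂) (t : Θ),
        μ {ω | X₁ ω = x₁ ∧ X₂ ω = x₂ ∧ θ ω = t}
          = (g x₁ : ℝ≥0∞) * (f (T₁ x₁, x₂, t) : ℝ≥0∞) := by
  set U : Ω → 𝒯₁ := fun ω ↦ T₁ (X₁ ω)
  refine ⟨fun x₁ ↦ (μ (X₁ ⁻¹' {x₁})).toNNReal, fun q ↦ ∑ w,
    (μ[W ⁻¹' {w} | U ← q.1] * μ[X₂ ⁻¹' {q.2.1} | W ← w] * μ[θ ⁻¹' {q.2.2} | W ← w]).toNNReal,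
    fun x₁ x₂ t ↦ ?_⟩
  set S := θ ⁻¹' {t} ∩ (fun ω ↦ (X₁ ω, X₂ ω)) ⁻¹' ({x₁} ×ˢ {x₂})
  have hS : {ω | X₁ ω = x₁ ∧ X₂ ω = x₂ ∧ θ ω = t} = S := by
    ext ω; simp only [S, Set.mem_ofPred_eq, Set.mem_inter_iff, Set.mem_preimage,
      Set.mem_prod, Set.mem_singleton_iff]; tauto
  have hfiber (w : 𝒲) : μ (W ⁻¹' {w}) * μ[S | W ← w] = μ (X₁ ⁻¹' {x₁}) *
      (μ[W ⁻¹' {w} | U ← T₁ x₁] * μ[X₂ ⁻¹' {x₂} | W ← w] * μ[θ ⁻¹' {t} | W ← w]) :=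
    calc _ = μ[θ ⁻¹' {t} | W ← w] * μ[X₂ ⁻¹' {x₂} | W ← w] *
            (μ[X₁ ⁻¹' {x₁} | W ← w] * μ (W ⁻¹' {w})) := by
          rw [cond_preimage_inter_preimage_prod_eq_mul hW hθ hX₁ hX₂ hθW hci (.singleton t)
            (.singleton x₁) (.singleton x₂)]
          ring
      _ = _ := by
          rw [cond_mul_eq_inter (hW (.singleton w)),
            measure_inter_eq_mul_cond_of_condIndepFun hW hX₁ (hT₁.comp hX₁) hloc₁
              (U := U) (u := T₁ x₁) (fun ω (hω : X₁ ω = x₁) ↦ congrArg T₁ hω) w]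
          ring
  rw [hS]
  conv_lhs => rw [← sum_meas_smul_cond_fiber hW μ]
  simp only [Measure.coe_finsetSum, Measure.coe_smul, Finset.sum_apply, Pi.smul_apply, smul_eq_mul,
    hfiber, ENNReal.ofNNReal_finsetSum, ENNReal.coe_toNNReal (measure_ne_top _ _),
    ENNReal.coe_toNNReal (ENNReal.mul_ne_top (ENNReal.mul_ne_top (measure_ne_top _ _)
      (measure_ne_top _ _)) (measure_ne_top _ _)), Finset.mul_sum]

/-- **HCI model implies the factorization of Theorem 5 (easy direction of Proposition 2).**
Suppose `X₁` and `X₂` are conditionally independent given `W`, `θ` and `(X₁, X₂)` are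
conditionally independent given `W`, and `W` and `X₁` are conditionally independent given
`T₁(X₁)`. Then there exist nonnegative functions `g` and `f` such that the joint pmf
satisfies `p(x₁, x₂, t) = g(x₁) · f(T₁(x₁), x₂, t)` for all `x₁, x₂, t`. -/
theorem hci_implies_factorization
    {Ω Θ 𝒲 𝒳₁ 𝒳₂ 𝒯₁ : Type*}
    [MeasurableSpace Ω] [StandardBorelSpace Ω] [Nonempty Ω] [Fintype Ω]
    [Fintype Θ] [MeasurableSpace Θ] [MeasurableSingletonClass Θ]
    [Fintype 𝒲] [MeasurableSpace 𝒲] [MeasurableSingletonClass 𝒲]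
    [Fintype 𝒳₁] [MeasurableSpace 𝒳₁] [MeasurableSingletonClass 𝒳₁]
    [Fintype 𝒳₂] [MeasurableSpace 𝒳₂] [MeasurableSingletonClass 𝒳₂]
    [Fintype 𝒯₁] [MeasurableSpace 𝒯₁] [MeasurableSingletonClass 𝒯₁]
    (μ : Measure Ω) [IsProbabilityMeasure μ]
    (θ : Ω → Θ) (W : Ω → 𝒲) (X₁ : Ω → 𝒳₁) (X₂ : Ω → 𝒳₂) (T₁ : 𝒳₁ → 𝒯₁)
    (hθ : Measurable θ) (hW : Measurable W) (hX₁ : Measurable X₁) (hX₂ : Measurable X₂)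
    (hT₁ : Measurable T₁)
    -- HCI: X₁ and X₂ are conditionally independent given W
    (hci : CondIndepFun (MeasurableSpace.comap W inferInstance) hW.comap_le X₁ X₂ μ)
    -- HCI: θ and (X₁, X₂) are conditionally independent given W
    (hθW : CondIndepFun (MeasurableSpace.comap W inferInstance) hW.comap_le
      θ (fun ω => (X₁ ω, X₂ ω)) μ)
    -- W and X₁ are conditionally independent given T₁(X₁)
    (hloc₁ : CondIndepFun (MeasurableSpace.comap (fun ω => T₁ (X₁ ω)) inferInstance)
      ((hT₁.comp hX₁).comap_le) W X₁ μ) :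
    -- the joint pmf factorizes as p(x₁, x₂, t) = g(x₁) · f(T₁(x₁), x₂, t)
    ∃ (g : 𝒳₁ → NNReal) (f : 𝒯₁ × 𝒳₂ × Θ → NNReal),
      ∀ (x₁ : 𝒳₁) (x₂ : 𝒳₂) (t : Θ),
        μ {ω | X₁ ω = x₁ ∧ X₂ ω = x₂ ∧ θ ω = t}
          = (g x₁ : ℝ≥0∞) * (f (T₁ x₁, x₂, t) : ℝ≥0∞) :=
  hci_implies_factorization_general μ θ W X₁ X₂ T₁ hθ hW hX₁ hX₂ hT₁ hci hθW hloc₁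
end
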